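/- arXiv:1212.2180 — 3 statements merged into one kernel-verified Lean document; each statement's English description precedes it below -/
import Mathlib

section
/- Let Q ⊂ ℝ^N be a measurable set of finite measure and φ : ℝ → ℝ a continuous function with φ(s)·s ≥ 0 for all s ∈ ℝ. If uₙ → u almost everywhere in Q and sup_n ∫_Q φ(uₙ(x))·uₙ(x) dx < ∞, then φ(uₙ) → φ(u) strongly in L¹(Q). -/
/-!
Since `φ` is bounded on compact sets, `|s|` is large wherever `|φ(s)|` is, so the sign condition
gives `|φ(s)| ≤ δ φ(s) s` there for any prescribed `δ > 0`. Hence the bound on `∫ φ(uₙ) uₙ` makes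
`(φ(uₙ))` uniformly integrable, and Vitali's convergence theorem turns the a.e. convergence
`φ(uₙ) → φ(u)` into convergence in `L¹`.
-/

open MeasureTheory Filter
open scoped ENNReal NNReal Topology

theorem Continuous.exists_norm_le_mul_of_le_nnnorm {φ : ℝ → ℝ} (hφ : Continuous φ)
    (hsign : ∀ s, 0 ≤ φ s * s) {δ : ℝ} (hδ : 0 < δ) :
    ∃ K : ℝ≥0, ∀ t, K ≤ ‖φ t‖₊ → ‖φ t‖ ≤ δ * (φ t * t) := by
  obtain ⟨M, hM⟩ := (isCompact_Icc (a := -δ⁻¹) (b := δ⁻¹)).exists_bound_of_continuousOn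
    hφ.continuousOn
  refine ⟨(M + 1).toNNReal, fun t ht => ?_⟩
  have hlarge : M < ‖φ t‖ := by
    have := (Real.toNNReal_le_iff_le_coe).1 ht
    push_cast at this
    linarith
  have ht_large : δ⁻¹ ≤ |t| := by
    by_contra! h
    exact (hM t (Set.mem_Icc.2 (abs_le.1 h.le))).not_gt hlarge
  calc ‖φ t‖ = δ * (δ⁻¹ * ‖φ t‖) := by field_simp
    _ ≤ δ * (|t| * ‖φ t‖) := by gcongr
    _ = δ * (φ t * t) := by
      rw [Real.norm_eq_abs, ← abs_mul, mul_comm t, abs_of_nonneg (hsign t)]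

theorem uniformIntegrable_comp_of_lintegral_mul_le {α ι : Type*} [MeasurableSpace α]
    {μ : Measure α} [IsFiniteMeasure μ] {φ : ℝ → ℝ} (hφ : Continuous φ)
    (hsign : ∀ s, 0 ≤ φ s * s) {v : ι → α → ℝ}
    (hv : ∀ i, AEStronglyMeasurable (fun x => φ (v i x)) μ) {C : ℝ}
    (hC : ∀ i, ∫⁻ x, ENNReal.ofReal (φ (v i x) * v i x) ∂μ ≤ ENNReal.ofReal C) :
    UniformIntegrable (fun i x => φ (v i x)) 1 μ := by
  refine uniformIntegrable_of le_rfl ENNReal.one_ne_top hv fun ε hε => ?_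
  set δ := ε / (|C| + 1)
  have hδ : 0 < δ := by positivity
  obtain ⟨K, hK⟩ := hφ.exists_norm_le_mul_of_le_nnnorm hsign hδ
  refine ⟨K, fun i => ?_⟩
  have hpt : ∀ x, ‖{x | K ≤ ‖φ (v i x)‖₊}.indicator (fun x => φ (v i x)) x‖ₑ ≤
      ENNReal.ofReal δ * ENNReal.ofReal (φ (v i x) * v i x) := by
    intro x
    by_cases hx : x ∈ {x | K ≤ ‖φ (v i x)‖₊}
    · rw [Set.indicator_of_mem hx, ← ofReal_norm, ← ENNReal.ofReal_mul hδ.le]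
      exact ENNReal.ofReal_le_ofReal (hK _ hx)
    · simp [Set.indicator_of_notMem hx]
  have hδC : δ * C ≤ ε := by
    calc δ * C ≤ δ * (|C| + 1) := by gcongr; linarith [le_abs_self C]
      _ = ε := div_mul_cancel₀ _ (by positivity)
  calc eLpNorm ({x | K ≤ ‖φ (v i x)‖₊}.indicator (fun x => φ (v i x))) 1 μ
      ≤ ∫⁻ x, ENNReal.ofReal δ * ENNReal.ofReal (φ (v i x) * v i x) ∂μ := by
        rw [eLpNorm_one_eq_lintegral_enorm]; exact lintegral_mono hpt
    _ = ENNReal.ofReal δ * ∫⁻ x, ENNReal.ofReal (φ (v i x) * v i x) ∂μ :=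
        lintegral_const_mul' _ _ ENNReal.ofReal_ne_top
    _ ≤ ENNReal.ofReal δ * ENNReal.ofReal C := by gcongr; exact hC i
    _ ≤ ENNReal.ofReal ε := by
        rw [← ENNReal.ofReal_mul hδ.le]; exact ENNReal.ofReal_le_ofReal hδC

theorem tendsto_integral_norm_sub_of_tendsto_eLpNorm {α E : Type*} [MeasurableSpace α]
    {μ : Measure α} [NormedAddCommGroup E] {f : ℕ → α → E} {g : α → E}
    (hf : ∀ n, AEStronglyMeasurable (f n) μ) (hg : AEStronglyMeasurable g μ)
    (h : Tendsto (fun n => eLpNorm (f n - g) 1 μ) atTop (𝓝 0)) :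
    Tendsto (fun n => ∫ x, ‖f n x - g x‖ ∂μ) atTop (𝓝 0) := by
  have := (ENNReal.tendsto_toReal ENNReal.zero_ne_top).comp h
  simpa [Function.comp_def, toReal_eLpNorm ((hf _).sub hg),
    lpNorm_one_eq_integral_norm ((hf _).sub hg)] using this

theorem stmt1_general {N : ℕ} (Q : Set (EuclideanSpace ℝ (Fin N)))
    (hQfin : volume Q < ⊤) (φ : ℝ → ℝ) (hφ : Continuous φ)
    (hsign : ∀ s : ℝ, 0 ≤ φ s * s)
    (u : ℕ → EuclideanSpace ℝ (Fin N) → ℝ) (ulim : EuclideanSpace ℝ (Fin N) → ℝ)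
    (hmeas : ∀ n, Measurable (u n))
    (hae : ∀ᵐ x ∂(volume.restrict Q), Tendsto (fun n => u n x) atTop (nhds (ulim x)))
    (C : ℝ)
    (hbound : ∀ n, ∫⁻ x in Q, ENNReal.ofReal (φ (u n x) * u n x) ≤ ENNReal.ofReal C) :
    IntegrableOn (fun x => φ (ulim x)) Q ∧
    Tendsto (fun n => ∫ x in Q, |φ (u n x) - φ (ulim x)|) atTop (nhds 0) := by
  have : IsFiniteMeasure (volume.restrict Q) := isFiniteMeasure_restrict.2 hQfin.ne
  have hUI : UniformIntegrable (fun n x => φ (u n x)) 1 (volume.restrict Q) :=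
    uniformIntegrable_comp_of_lintegral_mul_le hφ hsign
      (fun n => (hφ.measurable.comp (hmeas n)).aestronglyMeasurable) hbound
  have hlim : ∀ᵐ x ∂(volume.restrict Q), Tendsto (fun n => φ (u n x)) atTop (𝓝 (φ (ulim x))) :=
    hae.mono fun x hx => (hφ.tendsto _).comp hx
  have hint : IntegrableOn (fun x => φ (ulim x)) Q := hUI.integrable_of_ae_tendsto hlim
  have hL1 := tendsto_Lp_finite_of_tendsto_ae le_rfl ENNReal.one_ne_top hUI.1
    (memLp_one_iff_integrable.2 hint) hUI.2.1 hlim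
  simpa only [Real.norm_eq_abs] using
    ⟨hint, tendsto_integral_norm_sub_of_tendsto_eLpNorm hUI.1 hint.1 hL1⟩

/-- **Lemma A.2.** Let `Q ⊂ ℝ^N` be measurable with finite measure and
`φ : ℝ → ℝ` continuous with `φ(s)·s ≥ 0`. If `uₙ → u` a.e. in `Q` and the integrals
`∫_Q φ(uₙ)·uₙ` are uniformly bounded, then `φ(u) ∈ L¹(Q)` and `φ(uₙ) → φ(u)` in `L¹(Q)`. -/
theorem stmt1 {N : ℕ} (Q : Set (EuclideanSpace ℝ (Fin N))) (hQ : MeasurableSet Q)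
    (hQfin : volume Q < ⊤) (φ : ℝ → ℝ) (hφ : Continuous φ)
    (hsign : ∀ s : ℝ, 0 ≤ φ s * s)
    (u : ℕ → EuclideanSpace ℝ (Fin N) → ℝ) (ulim : EuclideanSpace ℝ (Fin N) → ℝ)
    (hmeas : ∀ n, Measurable (u n)) (hmeas' : Measurable ulim)
    (hae : ∀ᵐ x ∂(volume.restrict Q), Tendsto (fun n => u n x) atTop (nhds (ulim x)))
    (C : ℝ)
    (hbound : ∀ n, ∫⁻ x in Q, ENNReal.ofReal (φ (u n x) * u n x) ≤ ENNReal.ofReal C) :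
    IntegrableOn (fun x => φ (ulim x)) Q ∧
    Tendsto (fun n => ∫ x in Q, |φ (u n x) - φ (ulim x)|) atTop (nhds 0) :=
  stmt1_general Q hQfin φ hφ hsign u ulim hmeas hae C hbound
end

section
/- Let α ∈ (0,1), and let f : ℝ → ℝ be defined by f(s) = s·e^{|s|^α}. Then f is C¹, f(0) = 0, f'(s) ≥ 1 for all s ∈ ℝ, and ∫_{−∞}^{∞} |f'(s)| / (s·f(s) + 1) ds < ∞. -/
/-! The chain rule gives `f'(s) = e^{|s|^α} (1 + α |s|^α)` for `s ≠ 0`, since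
`s · sign s · |s|^{α-1} = |s|^α`; at `0` the difference quotient is `e^{|h|^α} → 1`.
This derivative is at least `1`, and the integrand
`e^{|s|^α} (1 + α |s|^α) / (s² e^{|s|^α} + 1)` is bounded by `8e (1 + |s|)^{α-2}`
(compare with `e` for `|s| ≤ 1` and with `s²` for `|s| ≥ 1`), which is integrable
as `α - 2 < -1`. -/

open MeasureTheory Real

theorem hasDerivAt_mul_of_continuousAt_zero {g : ℝ → ℝ} (hg : ContinuousAt g 0) :
    HasDerivAt (fun x => x * g x) (g 0) 0 := by
  rw [hasDerivAt_iff_tendsto_slope]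
  refine (hg.tendsto.mono_left nhdsWithin_le_nhds).congr' ?_
  filter_upwards [self_mem_nhdsWithin] with x (hx : x ≠ 0)
  rw [slope_def_field]
  field_simp
  simp

theorem hasDerivAt_mul_exp_abs_rpow {α : ℝ} (hα : 0 < α) (s : ℝ) :
    HasDerivAt (fun x => x * exp (|x| ^ α)) (exp (|s| ^ α) * (1 + α * |s| ^ α)) s := by
  rcases eq_or_ne s 0 with rfl | hs
  · have hcont : Continuous fun x : ℝ => exp (|x| ^ α) := by
      fun_prop (disch := exact hα.le)
    simpa [zero_rpow hα.ne'] using hasDerivAt_mul_of_continuousAt_zero hcont.continuousAt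
  · have hrpow := (hasDerivAt_abs hs).rpow_const (p := α) (Or.inl (abs_ne_zero.mpr hs))
    refine ((hasDerivAt_id' s).mul hrpow.exp).congr_deriv ?_
    have hsign : s * SignType.sign s = |s| := by
      rcases hs.lt_or_gt with h | h <;> simp [h, abs_of_neg, abs_of_pos]
    have habs : |s| * |s| ^ (α - 1) = |s| ^ α := by
      rw [mul_comm, ← rpow_add_one (abs_ne_zero.mpr hs), sub_add_cancel]
    linear_combination exp (|s| ^ α) * α * |s| ^ (α - 1) * hsign + exp (|s| ^ α) * α * habs

theorem one_add_mul_rpow_le {α t : ℝ} (hα₀ : 0 ≤ α) (hα₁ : α ≤ 1) (ht : 0 ≤ t) :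
    1 + α * t ^ α ≤ 2 * (1 + t) ^ α := by
  have h₁ : 1 ≤ (1 + t) ^ α := one_le_rpow (by linarith) hα₀
  have h₂ : t ^ α ≤ (1 + t) ^ α := rpow_le_rpow ht (by linarith) hα₀
  nlinarith [rpow_nonneg ht α]

theorem exp_rpow_mul_one_add_sq_le {α t : ℝ} (hα : 0 ≤ α) (ht : 0 ≤ t) :
    exp (t ^ α) * (1 + t) ^ 2 ≤ 4 * exp 1 * (t ^ 2 * exp (t ^ α) + 1) := by
  have hE : 0 ≤ t ^ 2 * exp (t ^ α) := by positivity
  rcases le_total t 1 with ht₁ | ht₁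
  · calc exp (t ^ α) * (1 + t) ^ 2 ≤ exp 1 * 2 ^ 2 := by
          gcongr
          · exact rpow_le_one ht ht₁ hα
          · linarith
      _ ≤ 4 * exp 1 * (t ^ 2 * exp (t ^ α) + 1) := by nlinarith [exp_pos 1]
  · calc exp (t ^ α) * (1 + t) ^ 2 ≤ exp (t ^ α) * (2 * t) ^ 2 := by gcongr; linarith
      _ = 4 * 1 * (t ^ 2 * exp (t ^ α)) := by ring
      _ ≤ 4 * exp 1 * (t ^ 2 * exp (t ^ α) + 1) := by
          gcongr
          · exact one_le_exp zero_le_one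
          · linarith

theorem exp_rpow_div_le {α t : ℝ} (hα₀ : 0 ≤ α) (hα₁ : α ≤ 1) (ht : 0 ≤ t) :
    exp (t ^ α) * (1 + α * t ^ α) / (t ^ 2 * exp (t ^ α) + 1)
      ≤ 8 * exp 1 * (1 + t) ^ (α - 2) := by
  have hu : 0 < 1 + t := by linarith
  have hden : 0 < t ^ 2 * exp (t ^ α) + 1 := by positivity
  calc exp (t ^ α) * (1 + α * t ^ α) / (t ^ 2 * exp (t ^ α) + 1)
      ≤ exp (t ^ α) * (2 * (1 + t) ^ α) / (t ^ 2 * exp (t ^ α) + 1) := by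
        gcongr; exact one_add_mul_rpow_le hα₀ hα₁ ht
    _ = 2 * (1 + t) ^ α * (exp (t ^ α) * (1 + t) ^ 2 / (t ^ 2 * exp (t ^ α) + 1))
          / (1 + t) ^ 2 := by
        field_simp
    _ ≤ 2 * (1 + t) ^ α * (4 * exp 1) / (1 + t) ^ 2 := by
        gcongr
        exact (div_le_iff₀ hden).mpr (exp_rpow_mul_one_add_sq_le hα₀ ht)
    _ = 8 * exp 1 * (1 + t) ^ (α - 2) := by
        rw [rpow_sub hu, rpow_two]; ring

theorem integrable_exp_abs_rpow_div {α : ℝ} (hα₀ : 0 < α) (hα₁ : α < 1) :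
    Integrable fun s : ℝ =>
      exp (|s| ^ α) * (1 + α * |s| ^ α) / (s ^ 2 * exp (|s| ^ α) + 1) := by
  have hmaj : Integrable fun s : ℝ => 8 * exp 1 * (1 + ‖s‖) ^ (-(2 - α)) :=
    (integrable_one_add_norm (by rw [Module.finrank_self, Nat.cast_one]; linarith)).const_mul _
  refine hmaj.mono' (Measurable.aestronglyMeasurable (by fun_prop)) (ae_of_all _ fun s => ?_)
  have hnum : 0 < 1 + α * |s| ^ α := by positivity
  rw [norm_of_nonneg (by positivity), neg_sub, norm_eq_abs, ← sq_abs]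
  exact exp_rpow_div_le hα₀.le hα₁.le (abs_nonneg s)

/-- For `α ∈ (0,1)`, `f(s) = s·e^{|s|^α}` is `C¹`, vanishes at `0`,
has derivative `≥ 1` everywhere, and satisfies `∫_{−∞}^{∞} |f'(s)|/(s·f(s)+1) ds < ∞`
(conditions (2.2) and (2.4) of the paper). -/
theorem stmt13 (α : ℝ) (hα : α ∈ Set.Ioo (0:ℝ) 1) (f : ℝ → ℝ)
    (hf : ∀ s, f s = s * Real.exp (|s| ^ α)) :
    ContDiff ℝ 1 f ∧ f 0 = 0 ∧ (∀ s, 1 ≤ deriv f s) ∧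
    Integrable (fun s => |deriv f s| / (s * f s + 1)) := by
  obtain ⟨hα₀, hα₁⟩ := hα
  obtain rfl : f = fun s => s * exp (|s| ^ α) := funext hf
  have hderiv : deriv (fun s => s * exp (|s| ^ α)) =
      fun s => exp (|s| ^ α) * (1 + α * |s| ^ α) :=
    funext fun s => (hasDerivAt_mul_exp_abs_rpow hα₀ s).deriv
  have hone_le : ∀ s : ℝ, 1 ≤ exp (|s| ^ α) * (1 + α * |s| ^ α) := fun s =>
    one_le_mul_of_one_le_of_one_le (one_le_exp (by positivity))
      (le_add_of_nonneg_right (by positivity))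
  refine ⟨?_, by simp, fun s => hderiv ▸ hone_le s, ?_⟩
  · refine contDiff_one_iff_deriv.mpr
      ⟨fun s => (hasDerivAt_mul_exp_abs_rpow hα₀ s).differentiableAt, ?_⟩
    rw [hderiv]
    fun_prop (disch := exact hα₀.le)
  · refine (integrable_exp_abs_rpow_div hα₀ hα₁).congr (ae_of_all _ fun s => ?_)
    dsimp only
    rw [hderiv, abs_of_pos (zero_lt_one.trans_le (hone_le s))]
    ring
end

section
/- Let f₁ : ℝ → ℝ be a continuous strictly increasing bijection with f₁(0) = 0, and suppose ∫₁^∞ f₁'(ν)/(ν f₁(ν)) dν < ∞ and ∫_{−∞}^{−1} f₁'(ν)/(ν f₁(ν)) dν < ∞ (f₁ being C¹). Then for every ε > 0, α ∈ (0,1), and 0 ≤ s < t ≤ T, the integral ∫₀^{t−s} ( 1/(σ f₁⁻¹(ε σ^{−α})) − 1/(σ f₁⁻¹(−ε σ^{−α})) ) dσ is finite and bounded above by (1/α)( ∫_{f₁⁻¹(ε T^{−α})}^∞ f₁'(ν)/(ν f₁(ν)) dν + ∫_{−∞}^{f₁⁻¹(−ε T^{−α})} f₁'(ν)/(ν f₁(ν))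 dν ). -/
/-!
Substituting `σ = (f₁ ν / ε) ^ (-1/α)`, i.e. `ε σ^(-α) = f₁ ν`, turns `dσ / (σ ψ(ε σ^(-α)))` into
`α⁻¹ f₁'(ν) dν / (ν f₁ ν)` and maps `σ ∈ (0, τ)` onto `ν ∈ (ψ(ε τ^(-α)), ∞)`, so the positive part
of the integral equals `α⁻¹ ∫_{ψ(ε τ^(-α))}^∞ f₁'/(ν f₁)`. The integrand is nonnegative and the
interval only grows when `τ = t - s` is replaced by `T`. The negative part is the same computation
for the reflected function `ν ↦ -f₁(-ν)`.
-/

open MeasureTheory Set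

section InverseRpowSubstitution

variable {f f' ψ : ℝ → ℝ} {ε α τ ν : ℝ}

/-- The `σ > 0` with `ε * σ ^ (-α) = f ν`: the inverse of `σ ↦ ψ (ε * σ ^ (-α))`. -/
noncomputable def timeOfLevel (f : ℝ → ℝ) (ε α ν : ℝ) : ℝ := (f ν / ε) ^ (-α)⁻¹

lemma mul_timeOfLevel_rpow (hε : 0 < ε) (hα : α ≠ 0) (hfν : 0 ≤ f ν) :
    ε * timeOfLevel f ε α ν ^ (-α) = f ν := by
  rw [timeOfLevel, Real.rpow_inv_rpow (div_nonneg hfν hε.le) (neg_ne_zero.2 hα),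
    mul_div_cancel₀ _ hε.ne']

lemma timeOfLevel_inverse (hinv₂ : Function.RightInverse ψ f) (hε : 0 < ε) (hα : α ≠ 0)
    {σ : ℝ} (hσ : 0 ≤ σ) : timeOfLevel f ε α (ψ (ε * σ ^ (-α))) = σ := by
  rw [timeOfLevel, hinv₂, mul_div_cancel_left₀ _ hε.ne',
    Real.rpow_rpow_inv hσ (neg_ne_zero.2 hα)]

lemma hasDerivAt_timeOfLevel (hf : HasDerivAt f (f' ν) ν) (hfν : f ν ≠ 0) (hε : 0 < ε) :
    HasDerivAt (timeOfLevel f ε α)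
      (f' ν / ε * (-α)⁻¹ * (f ν / ε) ^ ((-α)⁻¹ - 1)) ν :=
  (hf.div_const ε).rpow_const (Or.inl (div_ne_zero hfν hε.ne'))

lemma strictAntiOn_timeOfLevel (hmono : StrictMono f) (hε : 0 < ε) (hα : 0 < α) :
    StrictAntiOn (timeOfLevel f ε α) {ν | 0 < f ν} := fun _ hx _ _ hxy =>
  Real.rpow_lt_rpow_of_neg (div_pos hx hε) (div_lt_div_of_pos_right (hmono hxy) hε)
    (inv_lt_zero.2 (neg_neg_of_pos hα))

lemma timeOfLevel_image_Ioi (hmono : StrictMono f) (hinv₂ : Function.RightInverse ψ f)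
    (hε : 0 < ε) (hα : 0 < α) (hτ : 0 < τ) :
    timeOfLevel f ε α '' Ioi (ψ (ε * τ ^ (-α))) = Ioo 0 τ := by
  have hfa : 0 < f (ψ (ε * τ ^ (-α))) := by rw [hinv₂]; positivity
  ext σ
  constructor
  · rintro ⟨ν, hν, rfl⟩
    have hfν : 0 < f ν := hfa.trans (hmono hν)
    refine ⟨Real.rpow_pos_of_pos (div_pos hfν hε) _, ?_⟩
    calc timeOfLevel f ε α ν < timeOfLevel f ε α (ψ (ε * τ ^ (-α))) :=
          strictAntiOn_timeOfLevel hmono hε hα hfa hfν hν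
      _ = τ := timeOfLevel_inverse hinv₂ hε hα.ne' hτ.le
  · rintro ⟨hσ, hστ⟩
    refine ⟨ψ (ε * σ ^ (-α)), ?_, timeOfLevel_inverse hinv₂ hε hα.ne' hσ.le⟩
    rw [mem_Ioi, ← hmono.lt_iff_lt, hinv₂, hinv₂]
    exact mul_lt_mul_of_pos_left (Real.rpow_lt_rpow_of_neg hσ hστ (neg_neg_of_pos hα)) hε

lemma abs_deriv_timeOfLevel_smul (hinv₁ : Function.LeftInverse ψ f) (hε : 0 < ε) (hα : 0 < α)
    (hf'ν : 0 ≤ f' ν) (hfν : 0 < f ν) :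
    |f' ν / ε * (-α)⁻¹ * (f ν / ε) ^ ((-α)⁻¹ - 1)| •
        (1 / (timeOfLevel f ε α ν * ψ (ε * timeOfLevel f ε α ν ^ (-α)))) =
      α⁻¹ * (f' ν / (ν * f ν)) := by
  have hfε : 0 < f ν / ε := div_pos hfν hε
  rw [mul_timeOfLevel_rpow hε hα.ne' hfν.le, hinv₁, smul_eq_mul, inv_neg, mul_neg, neg_mul,
    abs_neg, abs_of_nonneg (by positivity), Real.rpow_sub_one hfε.ne', timeOfLevel]
  have := (Real.rpow_pos_of_pos hfε (-α⁻¹)).ne'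
  field_simp

lemma integrableOn_and_integral_Ioo_one_div_mul_inverse_rpow
    (hf : ∀ ν, HasDerivAt f (f' ν) ν) (hmono : StrictMono f)
    (hinv₁ : Function.LeftInverse ψ f) (hinv₂ : Function.RightInverse ψ f)
    (hε : 0 < ε) (hα : 0 < α) (hτ : 0 < τ)
    (hint : IntegrableOn (fun ν => f' ν / (ν * f ν)) (Ioi (ψ (ε * τ ^ (-α))))) :
    IntegrableOn (fun σ => 1 / (σ * ψ (ε * σ ^ (-α)))) (Ioo 0 τ) ∧
      ∫ σ in Ioo 0 τ, 1 / (σ * ψ (ε * σ ^ (-α))) =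
        α⁻¹ * ∫ ν in Ioi (ψ (ε * τ ^ (-α))), f' ν / (ν * f ν) := by
  set a := ψ (ε * τ ^ (-α))
  have hpos : Ioi a ⊆ {ν | 0 < f ν} := fun ν hν =>
    (show 0 < f a by rw [hinv₂]; positivity).trans (hmono hν)
  have hderiv : ∀ ν ∈ Ioi a, HasDerivWithinAt (timeOfLevel f ε α)
      (f' ν / ε * (-α)⁻¹ * (f ν / ε) ^ ((-α)⁻¹ - 1)) (Ioi a) ν := fun ν hν =>
    (hasDerivAt_timeOfLevel (hf ν) (hpos hν).ne' hε).hasDerivWithinAt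
  have hinj : InjOn (timeOfLevel f ε α) (Ioi a) :=
    ((strictAntiOn_timeOfLevel hmono hε hα).mono hpos).injOn
  have hkey : ∀ ν ∈ Ioi a, |f' ν / ε * (-α)⁻¹ * (f ν / ε) ^ ((-α)⁻¹ - 1)| •
      (1 / (timeOfLevel f ε α ν * ψ (ε * timeOfLevel f ε α ν ^ (-α)))) =
        α⁻¹ * (f' ν / (ν * f ν)) := fun ν hν =>
    abs_deriv_timeOfLevel_smul hinv₁ hε hα ((hf ν).nonneg_of_monotone hmono.monotone) (hpos hν)
  rw [← timeOfLevel_image_Ioi hmono hinv₂ hε hα hτ,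
    integrableOn_image_iff_integrableOn_abs_deriv_smul measurableSet_Ioi hderiv hinj,
    integral_image_eq_integral_abs_deriv_smul measurableSet_Ioi hderiv hinj,
    setIntegral_congr_fun measurableSet_Ioi hkey, integral_const_mul]
  exact ⟨IntegrableOn.congr_fun (hint.const_mul α⁻¹) (fun ν hν => (hkey ν hν).symm)
    measurableSet_Ioi, rfl⟩

end InverseRpowSubstitution

lemma integrableOn_Ici_of_continuousOn_Icc {g : ℝ → ℝ} {a b : ℝ} (hc : ContinuousOn g (Icc a b))
    (hg : IntegrableOn g (Ici b)) : IntegrableOn g (Ici a) :=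
  (hc.integrableOn_Icc.union hg).mono_set fun x hx => (le_total x b).imp (⟨hx, ·⟩) id

section TailBound

variable {f f' ψ : ℝ → ℝ} {ε α τ T : ℝ}

lemma integrableOn_and_integral_Ioo_one_div_mul_inverse_rpow_le
    (hf : ∀ ν, HasDerivAt f (f' ν) ν) (hf' : Continuous f') (hmono : StrictMono f)
    (h0 : f 0 = 0) (hinv₁ : Function.LeftInverse ψ f) (hinv₂ : Function.RightInverse ψ f)
    (hint : IntegrableOn (fun ν => f' ν / (ν * f ν)) (Ici 1))
    (hε : 0 < ε) (hα : 0 < α) (hτ : 0 < τ) (hτT : τ ≤ T) :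
    IntegrableOn (fun σ => 1 / (σ * ψ (ε * σ ^ (-α)))) (Ioo 0 τ) ∧
      ∫ σ in Ioo 0 τ, 1 / (σ * ψ (ε * σ ^ (-α))) ≤
        α⁻¹ * ∫ ν in Ici (ψ (ε * T ^ (-α))), f' ν / (ν * f ν) := by
  set A := ψ (ε * T ^ (-α))
  have hT : 0 < T := hτ.trans_le hτT
  have hfA : 0 < f A := by rw [hinv₂]; positivity
  have hA : 0 < A := by rwa [← h0, hmono.lt_iff_lt] at hfA
  have hAa : A ≤ ψ (ε * τ ^ (-α)) := by
    rw [← hmono.le_iff_le, hinv₂, hinv₂]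
    exact mul_le_mul_of_nonneg_left (Real.rpow_le_rpow_of_nonpos hτ hτT (by linarith)) hε.le
  have hden : ∀ ν ∈ Ici A, 0 < ν * f ν := fun ν hν =>
    mul_pos (hA.trans_le hν) (hfA.trans_le (hmono.monotone hν))
  have hfc : Continuous f := continuous_iff_continuousAt.2 fun ν => (hf ν).continuousAt
  have hFint : IntegrableOn (fun ν => f' ν / (ν * f ν)) (Ici A) :=
    integrableOn_Ici_of_continuousOn_Icc (hf'.continuousOn.div
      (continuous_id.mul hfc).continuousOn fun ν hν => (hden ν hν.1).ne') hint
  have hFnn : ∀ ν ∈ Ici A, 0 ≤ f' ν / (ν * f ν) := fun ν hν =>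
    div_nonneg ((hf ν).nonneg_of_monotone hmono.monotone) (hden ν hν).le
  obtain ⟨hI, hE⟩ := integrableOn_and_integral_Ioo_one_div_mul_inverse_rpow hf hmono hinv₁ hinv₂
    hε hα hτ (hFint.mono_set (Ioi_subset_Ici hAa))
  refine ⟨hI, hE ▸ mul_le_mul_of_nonneg_left ?_ (inv_nonneg.2 hα.le)⟩
  exact setIntegral_mono_set hFint (ae_restrict_of_forall_mem measurableSet_Ici hFnn)
    (Ioi_subset_Ici hAa).eventuallyLE

lemma integrableOn_and_neg_integral_Ioo_one_div_mul_inverse_neg_rpow_le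
    (hf : ∀ ν, HasDerivAt f (f' ν) ν) (hf' : Continuous f') (hmono : StrictMono f)
    (h0 : f 0 = 0) (hinv₁ : Function.LeftInverse ψ f) (hinv₂ : Function.RightInverse ψ f)
    (hint : IntegrableOn (fun ν => f' ν / (ν * f ν)) (Iic (-1)))
    (hε : 0 < ε) (hα : 0 < α) (hτ : 0 < τ) (hτT : τ ≤ T) :
    IntegrableOn (fun σ => 1 / (σ * ψ (-(ε * σ ^ (-α))))) (Ioo 0 τ) ∧
      -∫ σ in Ioo 0 τ, 1 / (σ * ψ (-(ε * σ ^ (-α)))) ≤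
        α⁻¹ * ∫ ν in Iic (ψ (-(ε * T ^ (-α)))), f' ν / (ν * f ν) := by
  -- `ν ↦ -f (-ν)` is again a strictly increasing bijection fixing `0`, with inverse `u ↦ -ψ (-u)`.
  have hrefl : (fun ν => f' (-ν) / (ν * -f (-ν))) = fun ν => f' (-ν) / (-ν * f (-ν)) := by
    simp only [neg_mul_comm]
  have hneg : (fun σ => 1 / (σ * -ψ (-(ε * σ ^ (-α))))) =
      fun σ => -(1 / (σ * ψ (-(ε * σ ^ (-α))))) := by
    simp only [mul_neg, div_neg]
  obtain ⟨hI, hE⟩ := integrableOn_and_integral_Ioo_one_div_mul_inverse_rpow_le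
    (f := fun ν => -f (-ν)) (f' := fun ν => f' (-ν)) (ψ := fun u => -ψ (-u))
    (fun ν => ((hf (-ν)).comp ν (hasDerivAt_neg ν)).neg.congr_deriv (by ring))
    (hf'.comp continuous_neg) (fun _ _ h => neg_lt_neg (hmono (neg_lt_neg h))) (by simp [h0])
    (fun ν => by simp [hinv₁ (-ν)]) (fun u => by simp [hinv₂ (-u)])
    (hrefl ▸ hint.comp_neg_Ici) hε hα hτ hτT
  rw [hneg] at hI hE
  rw [hrefl, integral_neg, integral_Ici_eq_integral_Ioi,
    integral_comp_neg_Ioi _ fun ν => f' ν / (ν * f ν), neg_neg] at hE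
  exact ⟨by simpa using hI.neg, hE⟩

end TailBound

theorem stmt19_general (f₁ ψ : ℝ → ℝ) (hf₁ : ContDiff ℝ 1 f₁) (hmono : StrictMono f₁)
    (h0 : f₁ 0 = 0)
    (hinv₁ : Function.LeftInverse ψ f₁) (hinv₂ : Function.RightInverse ψ f₁)
    (hint1 : IntegrableOn (fun ν => deriv f₁ ν / (ν * f₁ ν)) (Set.Ici (1:ℝ)))
    (hint2 : IntegrableOn (fun ν => deriv f₁ ν / (ν * f₁ ν)) (Set.Iic (-1:ℝ)))
    (ε α s t T : ℝ) (hε : 0 < ε) (hα : α ∈ Set.Ioo (0:ℝ) 1)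
    (hs : 0 ≤ s) (hst : s < t) (htT : t ≤ T) :
    IntegrableOn
        (fun σ => 1 / (σ * ψ (ε * σ ^ (-α))) - 1 / (σ * ψ (-(ε * σ ^ (-α)))))
        (Set.Ioc 0 (t - s)) ∧
    (∫ σ in Set.Ioc (0:ℝ) (t - s),
        (1 / (σ * ψ (ε * σ ^ (-α))) - 1 / (σ * ψ (-(ε * σ ^ (-α)))))) ≤
      (1 / α) *
        ((∫ ν in Set.Ici (ψ (ε * T ^ (-α))), deriv f₁ ν / (ν * f₁ ν)) +
          ∫ ν in Set.Iic (ψ (-(ε * T ^ (-α)))), deriv f₁ ν / (ν * f₁ ν)) := by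
  have hf : ∀ ν, HasDerivAt f₁ (deriv f₁ ν) ν := fun ν =>
    (hf₁.differentiable one_ne_zero ν).hasDerivAt
  have hf' : Continuous (deriv f₁) := hf₁.continuous_deriv le_rfl
  have hτ : 0 < t - s := sub_pos.2 hst
  have hτT : t - s ≤ T := by linarith
  obtain ⟨hI₁, hE₁⟩ := integrableOn_and_integral_Ioo_one_div_mul_inverse_rpow_le hf hf' hmono h0
    hinv₁ hinv₂ hint1 hε hα.1 hτ hτT
  obtain ⟨hI₂, hE₂⟩ := integrableOn_and_neg_integral_Ioo_one_div_mul_inverse_neg_rpow_le hf hf'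
    hmono h0 hinv₁ hinv₂ hint2 hε hα.1 hτ hτT
  refine ⟨(integrableOn_Ioc_iff_integrableOn_Ioo).2 (hI₁.sub hI₂), ?_⟩
  rw [integral_Ioc_eq_integral_Ioo, integral_sub hI₁ hI₂, one_div α, mul_add]
  linarith

/-- **key computation in Lemma 3.3.** Let `f₁` be a `C¹` strictly increasing
bijection of `ℝ` with `f₁(0) = 0` and inverse `ψ`, such that
`∫₁^∞ f₁'(ν)/(ν f₁(ν)) dν < ∞` and `∫_{−∞}^{−1} f₁'(ν)/(ν f₁(ν)) dν < ∞`. Then for every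
`ε > 0`, `α ∈ (0,1)` and `0 ≤ s < t ≤ T`, the integral
`∫₀^{t−s} (1/(σ f₁⁻¹(ε σ^{−α})) − 1/(σ f₁⁻¹(−ε σ^{−α}))) dσ` is finite and bounded by
`(1/α)(∫_{f₁⁻¹(ε T^{−α})}^∞ f₁'(ν)/(ν f₁(ν)) dν + ∫_{−∞}^{f₁⁻¹(−ε T^{−α})} f₁'(ν)/(ν f₁(ν)) dν)`. -/
theorem stmt19 (f₁ ψ : ℝ → ℝ) (hf₁ : ContDiff ℝ 1 f₁) (hmono : StrictMono f₁)
    (hbij : Function.Bijective f₁) (h0 : f₁ 0 = 0)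
    (hinv₁ : Function.LeftInverse ψ f₁) (hinv₂ : Function.RightInverse ψ f₁)
    (hint1 : IntegrableOn (fun ν => deriv f₁ ν / (ν * f₁ ν)) (Set.Ici (1:ℝ)))
    (hint2 : IntegrableOn (fun ν => deriv f₁ ν / (ν * f₁ ν)) (Set.Iic (-1:ℝ)))
    (ε α s t T : ℝ) (hε : 0 < ε) (hα : α ∈ Set.Ioo (0:ℝ) 1)
    (hs : 0 ≤ s) (hst : s < t) (htT : t ≤ T) :
    IntegrableOn
        (fun σ => 1 / (σ * ψ (ε * σ ^ (-α))) - 1 / (σ * ψ (-(ε * σ ^ (-α)))))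
        (Set.Ioc 0 (t - s)) ∧
    (∫ σ in Set.Ioc (0:ℝ) (t - s),
        (1 / (σ * ψ (ε * σ ^ (-α))) - 1 / (σ * ψ (-(ε * σ ^ (-α)))))) ≤
      (1 / α) *
        ((∫ ν in Set.Ici (ψ (ε * T ^ (-α))), deriv f₁ ν / (ν * f₁ ν)) +
          ∫ ν in Set.Iic (ψ (-(ε * T ^ (-α)))), deriv f₁ ν / (ν * f₁ ν)) :=
  stmt19_general f₁ ψ hf₁ hmono h0 hinv₁ hinv₂ hint1 hint2 ε α s t T hε hα hs hst htT
end
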